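/- If the map π : Γ(Ω,φ) → E(Ω,φ) (defined by Pδ(ω) = δ((πP)ω) for all ω ∈ Ω) is injective and E(Ω,φ) = E_b(Ω,φ), then every operator P ∈ Γ(Ω,φ) is regular. -/

import Mathlib

open MeasureTheory Filter Topology

/-- The pairing `⟨f, μ⟩ = ∫ f dμ` of a function with a finite signed Borel measure,
defined via the Jordan decomposition of the signed measure. -/
noncomputable def spair {Ω : Type*} [MeasurableSpace Ω] (f : Ω → ℝ) (μ : SignedMeasure Ω) : ℝ :=
  (∫ ω, f ω ∂μ.toJordanDecomposition.posPart) - (∫ ω, f ω ∂μ.toJordanDecomposition.negPart)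

/-- The weak* topology on the space `X*` of finite signed Borel measures, i.e. the topology
of convergence of the pairings with all continuous functions `x ∈ C(Ω, ℝ)`. With this topology
on the codomain, the product topology on `SignedMeasure Ω → SignedMeasure Ω` is precisely the
weak* operator topology (pointwise convergence with `X*` in its weak* topology). -/
noncomputable instance weakStarTopology {Ω : Type*} [TopologicalSpace Ω] [MeasurableSpace Ω] :
    TopologicalSpace (SignedMeasure Ω) :=
  TopologicalSpace.induced (fun μ => fun x : C(Ω, ℝ) => spair (⇑x) μ) inferInstance

/-- The operator `V : X* → X*`, pushforward by `φ`: `(Vμ)(e) = μ(φ⁻¹ e)`. -/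
noncomputable def Vop {Ω : Type*} [MeasurableSpace Ω] (φ : Ω → Ω) :
    SignedMeasure Ω → SignedMeasure Ω :=
  fun μ => μ.map φ

/-- The Dirac measure at `ω`, as a signed measure. -/
noncomputable def diracSM {Ω : Type*} [MeasurableSpace Ω] (ω : Ω) : SignedMeasure Ω :=
  (Measure.dirac ω).toSignedMeasure

/-- `Γ(Ω,φ)`: the closure of `{Vⁿ : n ≥ 0}` in the weak* operator topology. -/
def GammaSG {Ω : Type*} [TopologicalSpace Ω] [MeasurableSpace Ω] (φ : Ω → Ω) :
    Set (SignedMeasure Ω → SignedMeasure Ω) :=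
  closure (Set.range fun n : ℕ => (Vop φ)^[n])

/-- `G(Ω,φ)`: the closure of the convex hull of `{Vⁿ : n ≥ 0}` in the weak* operator topology. -/
def GSG {Ω : Type*} [TopologicalSpace Ω] [MeasurableSpace Ω] (φ : Ω → Ω) :
    Set (SignedMeasure Ω → SignedMeasure Ω) :=
  closure (convexHull ℝ (Set.range fun n : ℕ => (Vop φ)^[n]))

/-- The kernel `L = {Q ∈ G(Ω,φ) : V ∘ Q = Q}` of the semigroup `G(Ω,φ)`. -/
def Lker {Ω : Type*} [TopologicalSpace Ω] [MeasurableSpace Ω] (φ : Ω → Ω) :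
    Set (SignedMeasure Ω → SignedMeasure Ω) :=
  {Q ∈ GSG φ | Vop φ ∘ Q = Q}

/-- The Ellis enveloping semigroup `E(Ω,φ)`: the closure of the iterates `{φⁿ : n ≥ 0}`
in the product topology (pointwise convergence) on `Ω → Ω`. -/
def EllisE {Ω : Type*} [TopologicalSpace Ω] (φ : Ω → Ω) : Set (Ω → Ω) :=
  closure (Set.range fun n : ℕ => φ^[n])

/-- `E_b(Ω,φ)`: the smallest set of self-maps of `Ω` containing the iterates `{φⁿ : n ≥ 0}`
and sequentially closed under pointwise convergence. -/
inductive Eb {Ω : Type*} [TopologicalSpace Ω] (φ : Ω → Ω) : (Ω → Ω) → Prop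
  | iterate (n : ℕ) : Eb φ φ^[n]
  | lim (p : ℕ → Ω → Ω) (q : Ω → Ω) (hp : ∀ k, Eb φ (p k))
      (hq : ∀ ω, Tendsto (fun k => p k ω) atTop (𝓝 (q ω))) : Eb φ q

/-- `E₁(Ω,φ)`: the set of pointwise limits of sequences of iterates `φ^{n_k}`. -/
def E1SG {Ω : Type*} [TopologicalSpace Ω] (φ : Ω → Ω) : Set (Ω → Ω) :=
  {p | ∃ n : ℕ → ℕ, ∀ ω, Tendsto (fun k => φ^[n k] ω) atTop (𝓝 (p ω))}

/-- An operator `P ∈ Γ(Ω,φ)` with `p = πP` is regular if `p` is Borel measurable and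
`(Pμ)(e) = μ(p⁻¹ e)` for every Borel probability measure `μ` and Borel set `e`. -/
def RegularOperator {Ω : Type*} [TopologicalSpace Ω] [MeasurableSpace Ω]
    (P : SignedMeasure Ω → SignedMeasure Ω) (p : Ω → Ω) : Prop :=
  Measurable p ∧ ∀ (μ : Measure Ω) [IsProbabilityMeasure μ],
    ∀ e : Set Ω, MeasurableSet e → P μ.toSignedMeasure e = (μ (p ⁻¹' e)).toReal

/-- A minimal set of the semicascade `(Ω,φ)`: a nonempty closed `φ`-invariant set containing
no proper nonempty closed `φ`-invariant subset. -/
def IsMinimalSet {Ω : Type*} [TopologicalSpace Ω] (φ : Ω → Ω) (m : Set Ω) : Prop :=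
  m.Nonempty ∧ IsClosed m ∧ Set.MapsTo φ m m ∧
    ∀ m' ⊆ m, m'.Nonempty → IsClosed m' → Set.MapsTo φ m' m' → m' = m

/-- The orbit closure of a point `ω`: the closure of the trajectory `{φⁿ ω : n ≥ 0}`. -/
def orbitClosure {Ω : Type*} [TopologicalSpace Ω] (φ : Ω → Ω) (ω : Ω) : Set Ω :=
  closure (Set.range fun n : ℕ => φ^[n] ω)

/-- A `φ`-ergodic measure: a `φ`-invariant Borel probability measure `μ` such that
`μ(e) ∈ {0,1}` for every Borel set `e` with `φ⁻¹ e = e`. -/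
def IsErgodicMeasure {Ω : Type*} [MeasurableSpace Ω] (φ : Ω → Ω) (μ : Measure Ω) : Prop :=
  IsProbabilityMeasure μ ∧ (∀ e : Set Ω, MeasurableSet e → μ (φ ⁻¹' e) = μ e) ∧
    (∀ e : Set Ω, MeasurableSet e → φ ⁻¹' e = e → μ e = 0 ∨ μ e = 1)

/-- The support of a Borel measure: the smallest closed set of full measure
(the intersection of all closed sets of full measure). -/
def msupp {Ω : Type*} [TopologicalSpace Ω] [MeasurableSpace Ω] (μ : Measure Ω) : Set Ω :=
  ⋂₀ {s : Set Ω | IsClosed s ∧ μ sᶜ = 0}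

/-- The semicascade `(Ω,φ)` is tame: for every continuous `x` and every strictly increasing
sequence `n(1) < n(2) < ⋯`, the infimum over finitely supported real coefficients `a` with
`Σ|aₖ| = 1` of the sup-norms `‖Σₖ aₖ · (x ∘ φ^{n(k)})‖` is `0`. -/
def Tame {Ω : Type*} [TopologicalSpace Ω] [CompactSpace Ω] (φ : Ω → Ω)
    (hφ : Continuous φ) : Prop :=
  ∀ (x : C(Ω, ℝ)) (n : ℕ → ℕ), StrictMono n →
    sInf {r : ℝ | ∃ a : ℕ →₀ ℝ, (∑ k ∈ a.support, |a k|) = 1 ∧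
      r = ‖∑ k ∈ a.support, a k • x.comp ⟨φ^[n k], hφ.iterate (n k)⟩‖} = 0

/-- Points `a, b` are proximal: `inf_{n ≥ 0} d(φⁿ a, φⁿ b) = 0`. -/
def Proximal {Ω : Type*} [PseudoMetricSpace Ω] (φ : Ω → Ω) (a b : Ω) : Prop :=
  (⨅ n : ℕ, dist (φ^[n] a) (φ^[n] b)) = 0

variable {Ω : Type*} [TopologicalSpace Ω] [CompactSpace Ω] [TopologicalSpace.MetrizableSpace Ω]
  [Nonempty Ω] [MeasurableSpace Ω] [BorelSpace Ω]

/-!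
By the injectivity hypothesis an operator `P ∈ Γ(Ω,φ)` is determined by the point map
`p = πP`, so it suffices to show that the pushforward `μ ↦ p_* μ` lies in `Γ(Ω,φ)` and that `p`
is Borel. Evaluating at Dirac measures and embedding `Ω` into `ℝ^{C(Ω,ℝ)}` shows that `p`
belongs to the Ellis semigroup `E(Ω,φ) = E_b(Ω,φ)`. Along the inductive construction of `E_b`,
pointwise limits of Borel maps are Borel, and by dominated convergence `p_k → q` pointwise
forces `(p_k)_* μ → q_* μ` weak*; hence `q_*` stays in the closed set `Γ(Ω,φ)`.
-/

namespace MeasureTheory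

theorem VectorMeasure.map_map {α β γ M : Type*} [MeasurableSpace α] [MeasurableSpace β]
    [MeasurableSpace γ] [AddCommMonoid M] [TopologicalSpace M] (v : VectorMeasure α M)
    {f : α → β} {g : β → γ} (hf : Measurable f) (hg : Measurable g) :
    (v.map f).map g = v.map (g ∘ f) :=
  ext fun s hs => by
    rw [map_apply _ hg hs, map_apply _ hf (hg hs), map_apply _ (hg.comp hf) hs,
      Set.preimage_comp]

theorem VectorMeasure.map_sub {α β M : Type*} [MeasurableSpace α] [MeasurableSpace β]
    [AddCommGroup M] [TopologicalSpace M] [IsTopologicalAddGroup M] (v w : VectorMeasure α M)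
    {f : α → β} (hf : Measurable f) : (v - w).map f = v.map f - w.map f :=
  ext fun s hs => by simp only [sub_apply, map_apply _ hf hs]

theorem Measure.toSignedMeasure_map {α β : Type*} [MeasurableSpace α] [MeasurableSpace β]
    (μ : Measure α) [IsFiniteMeasure μ] {f : α → β} (hf : Measurable f) :
    μ.toSignedMeasure.map f = (μ.map f).toSignedMeasure :=
  VectorMeasure.ext fun s hs => by
    rw [VectorMeasure.map_apply _ hf hs, toSignedMeasure_apply_measurable (hf hs),
      toSignedMeasure_apply_measurable hs, measureReal_def, measureReal_def, map_apply hf hs]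

theorem Measure.add_eq_add_of_toSignedMeasure_sub_eq {α : Type*} [MeasurableSpace α]
    {a b c d : Measure α} [IsFiniteMeasure a] [IsFiniteMeasure b] [IsFiniteMeasure c]
    [IsFiniteMeasure d]
    (h : a.toSignedMeasure - b.toSignedMeasure = c.toSignedMeasure - d.toSignedMeasure) :
    a + d = c + b := by
  rw [← toSignedMeasure_eq_toSignedMeasure_iff, toSignedMeasure_add, toSignedMeasure_add]
  exact sub_eq_sub_iff_add_eq_add.mp h

end MeasureTheory

section Measurable

variable {α β : Type*} [MeasurableSpace α] [MeasurableSpace β]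

theorem diracSM_map {f : α → β} (hf : Measurable f) (a : α) :
    (diracSM a).map f = diracSM (f a) := by
  rw [diracSM, diracSM, Measure.toSignedMeasure_map _ hf]
  simp_rw [Measure.map_dirac' hf]

theorem iterate_Vop {φ : α → α} (hφ : Measurable φ) (n : ℕ) :
    (Vop φ)^[n] = fun μ => μ.map φ^[n] := by
  induction n with
  | zero => funext μ; exact μ.map_id.symm
  | succ n ih =>
    funext μ
    rw [Function.iterate_succ_apply, ih, Function.iterate_succ]
    exact VectorMeasure.map_map _ hφ (hφ.iterate n)

variable {f : α → ℝ}

theorem spair_toSignedMeasure_sub (hf : ∀ (ν : Measure α) [IsFiniteMeasure ν], Integrable f ν)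
    (a b : Measure α) [IsFiniteMeasure a] [IsFiniteMeasure b] :
    spair f (a.toSignedMeasure - b.toSignedMeasure) = ∫ x, f x ∂a - ∫ x, f x ∂b := by
  set j := (a.toSignedMeasure - b.toSignedMeasure).toJordanDecomposition
  have hj : j.posPart + b = a + j.negPart :=
    Measure.add_eq_add_of_toSignedMeasure_sub_eq
      (a.toSignedMeasure - b.toSignedMeasure).toSignedMeasure_toJordanDecomposition
  have hint := congrArg (fun ν => ∫ x, f x ∂ν) hj
  simp only [integral_add_measure (hf _) (hf _)] at hint
  rw [spair]
  linarith

theorem spair_toSignedMeasure (hf : ∀ (ν : Measure α) [IsFiniteMeasure ν], Integrable f ν)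
    (μ : Measure α) [IsFiniteMeasure μ] : spair f μ.toSignedMeasure = ∫ x, f x ∂μ := by
  simpa using spair_toSignedMeasure_sub hf μ 0

theorem spair_map {r : β → α} (hf : ∀ (ν : Measure α) [IsFiniteMeasure ν], Integrable f ν)
    (hr : Measurable r) (μ : SignedMeasure β) :
    spair f (μ.map r) = ∫ x, f (r x) ∂μ.toJordanDecomposition.posPart
      - ∫ x, f (r x) ∂μ.toJordanDecomposition.negPart := by
  have hμ : μ.map r = (μ.toJordanDecomposition.posPart.map r).toSignedMeasure
      - (μ.toJordanDecomposition.negPart.map r).toSignedMeasure := by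
    conv_lhs => rw [← μ.toSignedMeasure_toJordanDecomposition]
    rw [← Measure.toSignedMeasure_map _ hr, ← Measure.toSignedMeasure_map _ hr]
    exact VectorMeasure.map_sub _ _ hr
  rw [hμ, spair_toSignedMeasure_sub hf, integral_map hr.aemeasurable (hf _).aestronglyMeasurable,
    integral_map hr.aemeasurable (hf _).aestronglyMeasurable]

end Measurable

theorem isInducing_spair {X : Type*} [TopologicalSpace X] [MeasurableSpace X] :
    IsInducing fun μ : SignedMeasure X => fun x : C(X, ℝ) => spair x μ :=
  ⟨rfl⟩

theorem isClosedEmbedding_continuousMap_eval {X : Type*} [TopologicalSpace X] [CompactSpace X]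
    [T35Space X] : IsClosedEmbedding fun a : X => fun x : C(X, ℝ) => x a := by
  refine (continuous_pi fun x => x.continuous).isClosedEmbedding fun a b hab => ?_
  by_contra hne
  obtain ⟨f, hf, hfab⟩ := separatesPoints_continuous_of_t35Space hne
  exact hfab (congrFun hab ⟨f, hf⟩)

section Compact

variable {X : Type*} [TopologicalSpace X] [CompactSpace X] [MeasurableSpace X]
  [OpensMeasurableSpace X]

theorem ContinuousMap.integrable_of_compactSpace (x : C(X, ℝ)) (ν : Measure X)
    [IsFiniteMeasure ν] : Integrable x ν :=
  x.continuous.integrable_of_hasCompactSupport (.of_compactSpace _)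

theorem spair_diracSM (x : C(X, ℝ)) (a : X) : spair x (diracSM a) = x a := by
  rw [diracSM, spair_toSignedMeasure x.integrable_of_compactSpace,
    integral_dirac' _ _ x.continuous.stronglyMeasurable]

theorem tendsto_map_of_tendsto_pointwise {p : ℕ → X → X} {q : X → X}
    (hp : ∀ k, Measurable (p k)) (hq : Measurable q)
    (hlim : ∀ a, Tendsto (fun k => p k a) atTop (𝓝 (q a))) (μ : SignedMeasure X) :
    Tendsto (fun k => μ.map (p k)) atTop (𝓝 (μ.map q)) := by
  rw [isInducing_spair.tendsto_nhds_iff, tendsto_pi_nhds]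
  intro x
  have hint : ∀ (ν : Measure X) [IsFiniteMeasure ν],
      Tendsto (fun k => ∫ a, x (p k a) ∂ν) atTop (𝓝 (∫ a, x (q a) ∂ν)) := fun ν _ =>
    tendsto_integral_of_dominated_convergence (fun _ => ‖x‖)
      (fun k => (x.continuous.measurable.comp (hp k)).aestronglyMeasurable) (integrable_const _)
      (fun k => .of_forall fun a => x.norm_coe_le_norm (p k a))
      (.of_forall fun a => (x.continuous.tendsto _).comp (hlim a))
  simp only [Function.comp_def, spair_map x.integrable_of_compactSpace (hp _),
    spair_map x.integrable_of_compactSpace hq]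
  exact (hint _).sub (hint _)

end Compact

section Enveloping

variable {X : Type*} [TopologicalSpace X] [MeasurableSpace X] {φ : X → X}

theorem Eb.measurable [TopologicalSpace.PseudoMetrizableSpace X] [BorelSpace X]
    (hφ : Measurable φ) {q : X → X} (hq : Eb φ q) : Measurable q := by
  induction hq with
  | iterate n => exact hφ.iterate n
  | lim p q _ hlim ih => exact measurable_of_tendsto_metrizable' atTop ih (tendsto_pi_nhds.2 hlim)

theorem Eb.map_mem_GammaSG [CompactSpace X] [TopologicalSpace.PseudoMetrizableSpace X]
    [BorelSpace X] (hφ : Measurable φ) {q : X → X} (hq : Eb φ q) :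
    (fun μ : SignedMeasure X => μ.map q) ∈ GammaSG φ := by
  induction hq with
  | iterate n => exact subset_closure ⟨n, iterate_Vop hφ n⟩
  | lim p q hp hlim ih =>
    have hpm : ∀ k, Measurable (p k) := fun k => (hp k).measurable hφ
    have hqm : Measurable q := (Eb.lim p q hp hlim).measurable hφ
    exact isClosed_closure.mem_of_tendsto
      (tendsto_pi_nhds.2 (tendsto_map_of_tendsto_pointwise hpm hqm hlim)) (.of_forall ih)

theorem mem_EllisE_of_mem_GammaSG [CompactSpace X] [T35Space X] [OpensMeasurableSpace X]
    (hφ : Measurable φ) {P : SignedMeasure X → SignedMeasure X} (hP : P ∈ GammaSG φ) {p : X → X}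
    (hPp : ∀ a, P (diracSM a) = diracSM (p a)) : p ∈ EllisE φ := by
  let F : (SignedMeasure X → SignedMeasure X) → X → C(X, ℝ) → ℝ :=
    fun T a x => spair x (T (diracSM a))
  have hF : Continuous F :=
    continuous_pi fun a => isInducing_spair.continuous.comp (continuous_apply (diracSM a))
  let e : (X → X) → X → C(X, ℝ) → ℝ := Pi.map fun _ a x => x a
  have he : IsInducing e := .piMap fun _ => isClosedEmbedding_continuousMap_eval.isInducing
  have hFe : ∀ {T q}, (∀ a, T (diracSM a) = diracSM (q a)) → F T = e q := fun hTq => by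
    funext a x
    simp only [F, e, Pi.map_apply, hTq, spair_diracSM]
  have hVφ : ∀ n a, (Vop φ)^[n] (diracSM a) = diracSM (φ^[n] a) := fun n a => by
    rw [iterate_Vop hφ]
    exact diracSM_map (hφ.iterate n) a
  rw [EllisE, he.closure_eq_preimage_closure_image, Set.mem_preimage, ← hFe hPp]
  exact map_mem_closure hF hP
    (Set.forall_mem_range.2 fun n => ⟨φ^[n], ⟨n, rfl⟩, (hFe (hVφ n)).symm⟩)

end Enveloping

/-- Proposition 1.5: if the canonical map `π : Γ(Ω,φ) → E(Ω,φ)` is injective (operators in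
`Γ(Ω,φ)` are determined by their values on Dirac measures) and `E(Ω,φ) = E_b(Ω,φ)`, then
every operator `P ∈ Γ(Ω,φ)` is regular. -/
theorem stmt_3 (φ : Ω → Ω) (hφ : Continuous φ)
    (hinj : ∀ P₁ ∈ GammaSG φ, ∀ P₂ ∈ GammaSG φ,
      (∀ ω : Ω, P₁ (diracSM ω) = P₂ (diracSM ω)) → P₁ = P₂)
    (hEb : EllisE φ = {p : Ω → Ω | Eb φ p}) :
    ∀ P ∈ GammaSG φ, ∀ p : Ω → Ω,
      (∀ ω : Ω, P (diracSM ω) = diracSM (p ω)) → RegularOperator P p := by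
  intro P hP p hPp
  have hp : Eb φ p := by
    have hpE := mem_EllisE_of_mem_GammaSG hφ.measurable hP hPp
    rwa [hEb] at hpE
  have hpm : Measurable p := hp.measurable hφ.measurable
  have hP_eq : P = fun μ => μ.map p :=
    hinj P hP _ (hp.map_mem_GammaSG hφ.measurable) fun ω => by rw [hPp, diracSM_map hpm]
  refine ⟨hpm, fun μ _ e he => ?_⟩
  simp only [hP_eq]
  rw [Measure.toSignedMeasure_map _ hpm, Measure.toSignedMeasure_apply_measurable he,
    measureReal_def, Measure.map_apply hpm he]
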